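/- arXiv:0807.5094 — 2 statements merged into one kernel-verified Lean document; each statement's English description precedes it below -/
import Mathlib

section
/- Let A be an invertible g-row stochastic n×n matrix. Then A = I if and only if (x + Ay) ≻_gw (Rx + ARy) for all g-row stochastic R and all x, y ∈ F^n. -/
open Matrix

def GRowStochastic {n : ℕ} {𝕜 : Type*} [RCLike 𝕜] (R : Matrix (Fin n) (Fin n) 𝕜) : Prop :=
  R *ᵥ (1 : Fin n → 𝕜) = 1

def VGwMaj {n : ℕ} {𝕜 : Type*} [RCLike 𝕜] (x y : Fin n → 𝕜) : Prop :=
  ∃ R : Matrix (Fin n) (Fin n) 𝕜, GRowStochastic R ∧ y = R *ᵥ x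

/-! Putting `x = -A y` makes the left-hand side vanish, hence also its image: `A` commutes with
every g-row stochastic `R`.  For the rank-one g-row stochastic matrix `e e_iᵀ`, which sends `y`
to `y i • e`, commutation reads `(A y) i • e = y i • A e = y i • e`, so `A y = y`. -/

section

variable {n : ℕ} {𝕜 : Type*} [RCLike 𝕜]

theorem gRowStochastic_vecMulVec_one {v : Fin n → 𝕜} (hv : v ⬝ᵥ 1 = 1) :
    GRowStochastic (vecMulVec 1 v) := by
  rw [GRowStochastic, vecMulVec_mulVec, hv, MulOpposite.op_one, one_smul]

theorem VGwMaj.eq_zero_of_zero {y : Fin n → 𝕜} (h : VGwMaj 0 y) : y = 0 := by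
  obtain ⟨S, -, rfl⟩ := h
  exact mulVec_zero S

theorem mulVec_comm_of_forall_vGwMaj {A : Matrix (Fin n) (Fin n) 𝕜}
    (H : ∀ (R : Matrix (Fin n) (Fin n) 𝕜) (x y : Fin n → 𝕜), GRowStochastic R →
      VGwMaj (x + A *ᵥ y) (R *ᵥ x + A *ᵥ (R *ᵥ y)))
    {R : Matrix (Fin n) (Fin n) 𝕜} (hR : GRowStochastic R) (y : Fin n → 𝕜) :
    A *ᵥ (R *ᵥ y) = R *ᵥ (A *ᵥ y) := by
  have h := VGwMaj.eq_zero_of_zero (neg_add_cancel (A *ᵥ y) ▸ H R (-(A *ᵥ y)) y hR)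
  rwa [mulVec_neg, neg_add_eq_zero, eq_comm] at h

theorem eq_one_of_mulVec_comm {A : Matrix (Fin n) (Fin n) 𝕜} (hA : GRowStochastic A)
    (hcomm : ∀ R : Matrix (Fin n) (Fin n) 𝕜, GRowStochastic R →
      ∀ y, A *ᵥ (R *ᵥ y) = R *ᵥ (A *ᵥ y)) :
    A = 1 := by
  refine ext_iff_mulVec.mpr fun y => funext fun i => ?_
  have hRi := gRowStochastic_vecMulVec_one (v := Pi.single i (1 : 𝕜)) (by simp)
  have h := congrFun (hcomm _ hRi y) i
  simp only [vecMulVec_mulVec, op_smul_eq_smul, mulVec_smul, single_dotProduct] at h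
  rw [hA] at h
  simpa using h.symm

end

theorem stmt_6_general {n : ℕ} {𝕜 : Type*} [RCLike 𝕜]
    (A : Matrix (Fin n) (Fin n) 𝕜) (hA : GRowStochastic A) :
    A = 1 ↔
      ∀ (R : Matrix (Fin n) (Fin n) 𝕜) (x y : Fin n → 𝕜), GRowStochastic R →
        VGwMaj (x + A *ᵥ y) (R *ᵥ x + A *ᵥ (R *ᵥ y)) := by
  constructor
  · rintro rfl R x y hR
    exact ⟨R, hR, by rw [one_mulVec, one_mulVec, mulVec_add]⟩
  · exact fun H => eq_one_of_mulVec_comm hA fun R hR => mulVec_comm_of_forall_vGwMaj H hR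

theorem stmt_6 {n : ℕ} (hn : 2 ≤ n) {𝕜 : Type*} [RCLike 𝕜]
    (A : Matrix (Fin n) (Fin n) 𝕜) (hA : GRowStochastic A) (hAu : IsUnit A) :
    A = 1 ↔
      ∀ (R : Matrix (Fin n) (Fin n) 𝕜) (x y : Fin n → 𝕜), GRowStochastic R →
        VGwMaj (x + A *ᵥ y) (R *ᵥ x + A *ᵥ (R *ᵥ y)) :=
  stmt_6_general A hA
end

section
/- A linear operator T : M_{n,m}(F) → M_{n,m}(F) strongly preserves gw-majorization if and only if there exist an invertible g-row stochastic matrix A ∈ M_n(F) and an invertible matrix B ∈ M_m(F) such that T(X) = AXB for all X. -/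
/-!
A strong preserver `T` is injective, because `0 ≻ Y` forces `Y = 0`, hence bijective. The
matrices with all rows equal are exactly those that majorize nothing but themselves, so `T` maps
them to each other, acting on the common row as `c ↦ c B` with `B` invertible. Replacing `T` by
`X ↦ T(X) B⁻¹`, we may assume that `T` fixes them. Then `X ≻ (row i of T X, repeated)`, so every
row of `T X` is a combination of the rows of `X`. On matrices whose only nonzero row is row `p`
this makes every vector an eigenvector of `v ↦ (row i of T X)`, which is therefore a scalar
`a i p`; so `T X = A X`, and `T` fixing the all-ones matrix gives `A e = e`.
-/

open Matrix

def GwMaj {n m : ℕ} {𝕜 : Type*} [RCLike 𝕜] (X Y : Matrix (Fin n) (Fin m) 𝕜) : Prop :=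
  ∃ R : Matrix (Fin n) (Fin n) 𝕜, GRowStochastic R ∧ Y = R * X

section

variable {n m : ℕ} {𝕜 : Type*} [RCLike 𝕜]

namespace GRowStochastic

theorem one : GRowStochastic (1 : Matrix (Fin n) (Fin n) 𝕜) :=
  one_mulVec _

theorem mul {R S : Matrix (Fin n) (Fin n) 𝕜} (hR : GRowStochastic R) (hS : GRowStochastic S) :
    GRowStochastic (R * S) := by
  rw [GRowStochastic, ← mulVec_mulVec, hS, hR]

theorem inv {A : Matrix (Fin n) (Fin n) 𝕜} (hA : GRowStochastic A) (hU : IsUnit A) :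
    GRowStochastic A⁻¹ := by
  calc A⁻¹ *ᵥ 1 = A⁻¹ *ᵥ (A *ᵥ 1) := by rw [hA]
    _ = 1 := by rw [mulVec_mulVec, nonsing_inv_mul _ ((isUnit_iff_isUnit_det A).mp hU), one_mulVec]

theorem mul_replicateRow {R : Matrix (Fin n) (Fin n) 𝕜} (hR : GRowStochastic R)
    (c : Fin m → 𝕜) : R * replicateRow (Fin n) c = replicateRow (Fin n) c := by
  rw [← one_vecMulVec, mul_vecMulVec, hR]

end GRowStochastic

theorem gRowStochastic_replicateRow_single (i : Fin n) :
    GRowStochastic (replicateRow (Fin n) (Pi.single i (1 : 𝕜))) := by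
  funext k
  simp [replicateRow_mulVec_eq_const]

namespace GwMaj

theorem refl (X : Matrix (Fin n) (Fin m) 𝕜) : GwMaj X X :=
  ⟨1, GRowStochastic.one, (Matrix.one_mul X).symm⟩

theorem mul_right {X Y : Matrix (Fin n) (Fin m) 𝕜} (h : GwMaj X Y) (M : Matrix (Fin m) (Fin m) 𝕜) :
    GwMaj (X * M) (Y * M) := by
  obtain ⟨R, hR, rfl⟩ := h
  exact ⟨R, hR, Matrix.mul_assoc R X M⟩

theorem mul_left {X Y : Matrix (Fin n) (Fin m) 𝕜} (h : GwMaj X Y) {A : Matrix (Fin n) (Fin n) 𝕜}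
    (hA : GRowStochastic A) (hU : IsUnit A) : GwMaj (A * X) (A * Y) := by
  obtain ⟨R, hR, rfl⟩ := h
  refine ⟨A * R * A⁻¹, (hA.mul hR).mul (hA.inv hU), ?_⟩
  simp only [Matrix.mul_assoc, nonsing_inv_mul_cancel_left _ _ ((isUnit_iff_isUnit_det A).mp hU)]

theorem eq_of_replicateRow {c : Fin m → 𝕜} {Y : Matrix (Fin n) (Fin m) 𝕜}
    (h : GwMaj (replicateRow (Fin n) c) Y) : Y = replicateRow (Fin n) c := by
  obtain ⟨R, hR, rfl⟩ := h
  exact hR.mul_replicateRow c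

theorem exists_row_eq_vecMul {X Y : Matrix (Fin n) (Fin m) 𝕜} (h : GwMaj X Y) (i : Fin n) :
    ∃ r : Fin n → 𝕜, Y i = r ᵥ* X := by
  obtain ⟨R, -, rfl⟩ := h
  exact ⟨R i, rfl⟩

end GwMaj

theorem gwMaj_replicateRow_row (X : Matrix (Fin n) (Fin m) 𝕜) (i : Fin n) :
    GwMaj X (replicateRow (Fin n) (X i)) :=
  ⟨_, gRowStochastic_replicateRow_single i, by rw [← replicateRow_vecMul, single_one_vecMul]; rfl⟩

theorem gwMaj_mul_right_iff {X Y : Matrix (Fin n) (Fin m) 𝕜} {M : Matrix (Fin m) (Fin m) 𝕜}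
    (hM : IsUnit M) : GwMaj (X * M) (Y * M) ↔ GwMaj X Y := by
  refine ⟨fun h => ?_, fun h => h.mul_right M⟩
  have hd := (isUnit_iff_isUnit_det M).mp hM
  simpa only [Matrix.mul_assoc, mul_nonsing_inv _ hd, Matrix.mul_one] using h.mul_right M⁻¹

theorem gwMaj_mul_left_iff {X Y : Matrix (Fin n) (Fin m) 𝕜} {A : Matrix (Fin n) (Fin n) 𝕜}
    (hA : GRowStochastic A) (hU : IsUnit A) : GwMaj (A * X) (A * Y) ↔ GwMaj X Y := by
  refine ⟨fun h => ?_, fun h => h.mul_left hA hU⟩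
  have hd := (isUnit_iff_isUnit_det A).mp hU
  simpa only [← Matrix.mul_assoc, nonsing_inv_mul _ hd, Matrix.one_mul] using
    h.mul_left (hA.inv hU) (isUnit_nonsing_inv_iff.mpr hU)

def StronglyPreservesGwMaj (T : Matrix (Fin n) (Fin m) 𝕜 → Matrix (Fin n) (Fin m) 𝕜) : Prop :=
  ∀ X Y, GwMaj X Y ↔ GwMaj (T X) (T Y)

theorem stronglyPreservesGwMaj_mul_mul {A : Matrix (Fin n) (Fin n) 𝕜}
    {B : Matrix (Fin m) (Fin m) 𝕜} (hA : GRowStochastic A) (hUA : IsUnit A) (hUB : IsUnit B) :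
    StronglyPreservesGwMaj fun X : Matrix (Fin n) (Fin m) 𝕜 => A * X * B := fun X Y => by
  rw [gwMaj_mul_right_iff hUB, gwMaj_mul_left_iff hA hUA]

namespace StronglyPreservesGwMaj

variable {T : Matrix (Fin n) (Fin m) 𝕜 →ₗ[𝕜] Matrix (Fin n) (Fin m) 𝕜}

theorem injective (hT : StronglyPreservesGwMaj T) : Function.Injective T := by
  refine (injective_iff_map_eq_zero T).mpr fun D hD => ?_
  have h0 : GwMaj (T 0) (T D) := by rw [map_zero, hD]; exact GwMaj.refl 0
  obtain ⟨R, -, rfl⟩ := (hT 0 D).mpr h0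
  exact Matrix.mul_zero R

theorem surjective (hT : StronglyPreservesGwMaj T) : Function.Surjective T :=
  LinearMap.injective_iff_surjective.mp hT.injective

theorem mulRightLinearMap_comp (hT : StronglyPreservesGwMaj T) {B : Matrix (Fin m) (Fin m) 𝕜}
    (hB : IsUnit B) :
    StronglyPreservesGwMaj (mulRightLinearMap (Fin n) 𝕜 B ∘ₗ T) := fun X Y => by
  simp only [LinearMap.comp_apply, mulRightLinearMap_apply, gwMaj_mul_right_iff hB, hT X Y]

theorem map_replicateRow (hT : StronglyPreservesGwMaj T) (c : Fin m → 𝕜) (i : Fin n) :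
    T (replicateRow (Fin n) c) = replicateRow (Fin n) (T (replicateRow (Fin n) c) i) := by
  obtain ⟨Z, hZ⟩ := hT.surjective (replicateRow (Fin n) (T (replicateRow (Fin n) c) i))
  have hcZ : GwMaj (replicateRow (Fin n) c) Z :=
    (hT _ Z).mpr (hZ ▸ gwMaj_replicateRow_row _ i)
  rw [← hZ, hcZ.eq_of_replicateRow]

theorem exists_isUnit_map_replicateRow [Nonempty (Fin n)] (hT : StronglyPreservesGwMaj T) :
    ∃ B : Matrix (Fin m) (Fin m) 𝕜, IsUnit B ∧
      ∀ c, T (replicateRow (Fin n) c) = replicateRow (Fin n) c * B := by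
  let i : Fin n := Classical.arbitrary _
  let φ : (Fin m → 𝕜) →ₗ[𝕜] Fin m → 𝕜 :=
    { toFun := fun c => T (replicateRow (Fin n) c) i
      map_add' := fun c d => by simp only [replicateRow_add, map_add]; rfl
      map_smul' := fun t c => by simp only [replicateRow_smul, map_smul]; rfl }
  have hrep : ∀ c, T (replicateRow (Fin n) c) = replicateRow (Fin n) (φ c) :=
    fun c => hT.map_replicateRow c i
  have hφ : Function.Injective φ := fun c d hcd => by
    rwa [← replicateRow_inj (ι := Fin n), ← hrep, ← hrep, hT.injective.eq_iff,
      replicateRow_inj] at hcd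
  refine ⟨(LinearMap.toMatrix' φ)ᵀ, ?_, fun c => ?_⟩
  · rw [isUnit_transpose, ← mulVec_injective_iff_isUnit]
    rwa [show (LinearMap.toMatrix' φ).mulVec = φ from funext (LinearMap.toMatrix'_mulVec φ)]
  · rw [← replicateRow_vecMul, vecMul_transpose, LinearMap.toMatrix'_mulVec, hrep]

section FixingReplicateRow

variable (hT : StronglyPreservesGwMaj T)
  (hfix : ∀ c, T (replicateRow (Fin n) c) = replicateRow (Fin n) c)
include hT hfix

theorem exists_row_eq_vecMul (X : Matrix (Fin n) (Fin m) 𝕜) (i : Fin n) :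
    ∃ r : Fin n → 𝕜, T X i = r ᵥ* X := by
  have h : GwMaj (T X) (T (replicateRow (Fin n) (T X i))) := by
    rw [hfix]; exact gwMaj_replicateRow_row _ i
  exact ((hT _ _).mpr h).exists_row_eq_vecMul i

theorem exists_apply_single_eq_smul (i p : Fin n) :
    ∃ a : 𝕜, ∀ v : Fin m → 𝕜, T (Pi.single p v) i = a • v := by
  let f : (Fin m → 𝕜) →ₗ[𝕜] Fin m → 𝕜 :=
    LinearMap.proj i ∘ₗ T ∘ₗ LinearMap.single 𝕜 (fun _ : Fin n => Fin m → 𝕜) p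
  obtain ⟨a, ha⟩ : ∃ a : 𝕜, f = a • 1 := by
    refine LinearMap.exists_eq_smul_id_of_forall_notLinearIndependent fun v => ?_
    obtain ⟨r, hr⟩ := hT.exists_row_eq_vecMul hfix (Pi.single p v) i
    have hfv : f v = r p • v := by
      ext j
      change T (Pi.single p v) i j = r p * v j
      simp [hr, vecMul, dotProduct, Pi.single_apply, ite_apply]
    rw [LinearIndependent.pair_iff, hfv]
    intro h
    simpa using h (r p) (-1) (by simp)
  exact ⟨a, fun v => LinearMap.congr_fun ha v⟩

theorem exists_eq_mul_left [Nonempty (Fin m)] :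
    ∃ A : Matrix (Fin n) (Fin n) 𝕜, GRowStochastic A ∧ IsUnit A ∧ ∀ X, T X = A * X := by
  choose a ha using hT.exists_apply_single_eq_smul hfix
  have hT_eq : T = mulLeftLinearMap (Fin m) 𝕜 (of a) := LinearMap.pi_ext fun p v => by
    ext i j
    change T (of (Pi.single p v)) i j = (of a * of (Pi.single p v)) i j
    rw [show T (of (Pi.single p v)) i j = a i p * v j from congrFun (ha i p v) j]
    simp [mul_apply, Pi.single_apply, ite_apply]
  have hTA : ∀ X, T X = of a * X := LinearMap.congr_fun hT_eq
  refine ⟨of a, ?_, ?_, hTA⟩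
  · have h := hfix 1
    rwa [hTA, show replicateRow (Fin n) (1 : Fin m → 𝕜) = replicateCol (Fin m) 1 from rfl,
      ← replicateCol_mulVec, replicateCol_inj] at h
  · rw [← mulVec_injective_iff_isUnit]
    intro v w h
    rwa [← replicateCol_inj (ι := Fin m), replicateCol_mulVec, replicateCol_mulVec, ← hTA, ← hTA,
      hT.injective.eq_iff, replicateCol_inj] at h

end FixingReplicateRow

theorem exists_eq_mul_mul (hT : StronglyPreservesGwMaj T) :
    ∃ (A : Matrix (Fin n) (Fin n) 𝕜) (B : Matrix (Fin m) (Fin m) 𝕜),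
      GRowStochastic A ∧ IsUnit A ∧ IsUnit B ∧ ∀ X, T X = A * X * B := by
  by_cases hnm : Nonempty (Fin n) ∧ Nonempty (Fin m)
  · obtain ⟨_, _⟩ := hnm
    obtain ⟨B, hB, hTB⟩ := hT.exists_isUnit_map_replicateRow
    have hdB := (isUnit_iff_isUnit_det B).mp hB
    have hTB' := hT.mulRightLinearMap_comp (isUnit_nonsing_inv_iff.mpr hB)
    obtain ⟨A, hA, hUA, hTA⟩ := hTB'.exists_eq_mul_left fun c => by
      simp [hTB, Matrix.mul_assoc, mul_nonsing_inv _ hdB]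
    refine ⟨A, B, hA, hUA, hB, fun X => ?_⟩
    rw [← hTA X, LinearMap.comp_apply, mulRightLinearMap_apply,
      nonsing_inv_mul_cancel_right _ _ hdB]
  · have : Subsingleton (Matrix (Fin n) (Fin m) 𝕜) := by
      rw [not_and_or, not_nonempty_iff, not_nonempty_iff] at hnm
      rcases hnm with h | h <;> infer_instance
    exact ⟨1, 1, .one, isUnit_one, isUnit_one, fun X => Subsingleton.elim _ _⟩

end StronglyPreservesGwMaj

end

theorem stmt_12_general {n m : ℕ} {𝕜 : Type*} [RCLike 𝕜]
    (T : Matrix (Fin n) (Fin m) 𝕜 →ₗ[𝕜] Matrix (Fin n) (Fin m) 𝕜) :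
    (∀ X Y, GwMaj X Y ↔ GwMaj (T X) (T Y)) ↔
      ∃ (A : Matrix (Fin n) (Fin n) 𝕜) (B : Matrix (Fin m) (Fin m) 𝕜),
        GRowStochastic A ∧ IsUnit A ∧ IsUnit B ∧ ∀ X, T X = A * X * B := by
  refine ⟨StronglyPreservesGwMaj.exists_eq_mul_mul, ?_⟩
  rintro ⟨A, B, hA, hUA, hUB, hT⟩
  rw [show ⇑T = _ from funext hT]
  exact stronglyPreservesGwMaj_mul_mul hA hUA hUB

theorem stmt_12 {n m : ℕ} (hn : 2 ≤ n) {𝕜 : Type*} [RCLike 𝕜]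
    (T : Matrix (Fin n) (Fin m) 𝕜 →ₗ[𝕜] Matrix (Fin n) (Fin m) 𝕜) :
    (∀ X Y, GwMaj X Y ↔ GwMaj (T X) (T Y)) ↔
      ∃ (A : Matrix (Fin n) (Fin n) 𝕜) (B : Matrix (Fin m) (Fin m) 𝕜),
        GRowStochastic A ∧ IsUnit A ∧ IsUnit B ∧ ∀ X, T X = A * X * B :=
  stmt_12_general T
end
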